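/- Sub/super-solution for the horizon equation with Λ ≤ 0: if Λ ≤ 0, c > 0, K_min + Q_inf ≤ K_max + Q_sup, and c(K_min + Q_inf) > 1, then Φ₋ = ln(c(K_min + Q_inf)) and Φ₊ = ln(c(K_max + Q_sup) − (4/3)Λm²c³) satisfy 0 < Φ₋ ≤ Φ₊, and moreover the constant function Φ₋ satisfies (1/c)e^{Φ₋} + (4/3)Λm²c²e^{−2Φ₋} − K − Q ≤ 0 for all K ∈ [K_min, K_max] and Q ∈ [Q_inf, Q_sup], while Φ₊ satisfies (1/c)e^{Φ₊} + (4/3)Λm²c²e^{−2Φ₊} − K − Q ≥ 0 for all such K, Q. -/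
import Mathlib


/-- Sub/super-solutions of the horizon equation for `Λ ≤ 0`. -/
theorem stmt_15 (Λ m c Kmin Kmax Qinf Qsup : ℝ)
    (hΛ : Λ ≤ 0) (hc : 0 < c) (hle : Kmin + Qinf ≤ Kmax + Qsup)
    (h1 : 1 < c * (Kmin + Qinf)) :
    let Φm : ℝ := Real.log (c * (Kmin + Qinf))
    let Φp : ℝ := Real.log (c * (Kmax + Qsup) - (4 / 3) * Λ * m ^ 2 * c ^ 3)
    0 < Φm ∧ Φm ≤ Φp ∧
    (∀ K Q : ℝ, Kmin ≤ K → K ≤ Kmax → Qinf ≤ Q → Q ≤ Qsup →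
      (1 / c) * Real.exp Φm + (4 / 3) * Λ * m ^ 2 * c ^ 2 * Real.exp (-2 * Φm)
        - K - Q ≤ 0 ∧
      0 ≤ (1 / c) * Real.exp Φp + (4 / 3) * Λ * m ^ 2 * c ^ 2 * Real.exp (-2 * Φp)
        - K - Q) := by
  intro Φm Φp
  set a : ℝ := c * (Kmin + Qinf) with ha
  set b : ℝ := c * (Kmax + Qsup) - (4 / 3) * Λ * m ^ 2 * c ^ 3 with hb
  have hterm : 0 ≤ -((4 / 3) * Λ * m ^ 2 * c ^ 3) := by
    nlinarith [mul_nonneg (mul_nonneg (neg_nonneg.mpr hΛ) (sq_nonneg m)) (pow_nonneg hc.le 3)]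
  have hab : a ≤ b := by
    have : c * (Kmin + Qinf) ≤ c * (Kmax + Qsup) :=
      mul_le_mul_of_nonneg_left hle hc.le
    simp only [ha, hb]; linarith
  have ha0 : 0 < a := lt_trans one_pos h1
  have hb1 : 1 < b := lt_of_lt_of_le h1 hab
  have hb0 : 0 < b := lt_trans one_pos hb1
  have hΦm : Φm = Real.log a := rfl
  have hΦp : Φp = Real.log b := rfl
  have hΦm0 : 0 < Φm := Real.log_pos h1
  have hΦmp : Φm ≤ Φp := Real.log_le_log ha0 hab
  have hΦp0 : 0 < Φp := lt_of_lt_of_le hΦm0 hΦmp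
  have hea : Real.exp Φm = a := Real.exp_log ha0
  have heb : Real.exp Φp = b := Real.exp_log hb0
  refine ⟨hΦm0, hΦmp, fun K Q hK1 hK2 hQ1 hQ2 => ?_⟩
  have hΛc : (4 / 3) * Λ * m ^ 2 * c ^ 2 ≤ 0 := by
    nlinarith [mul_nonneg (mul_nonneg (neg_nonneg.mpr hΛ) (sq_nonneg m)) (pow_nonneg hc.le 2)]
  constructor
  · have h2 : Real.exp (-2 * Φm) ≤ 1 := by
      rw [Real.exp_le_one_iff]; linarith
    have h3 : (4 / 3) * Λ * m ^ 2 * c ^ 2 * Real.exp (-2 * Φm) ≤ 0 :=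
      mul_nonpos_of_nonpos_of_nonneg hΛc (Real.exp_pos _).le
    have h4 : (1 / c) * Real.exp Φm = Kmin + Qinf := by
      rw [hea, ha]; field_simp
    rw [h4]; linarith
  · have h2 : Real.exp (-2 * Φp) ≤ 1 := by
      rw [Real.exp_le_one_iff]; linarith
    have h3 : 0 ≤ (4 / 3) * Λ * m ^ 2 * c ^ 2 * (Real.exp (-2 * Φp) - 1) := by
      nlinarith

    have h4 : (1 / c) * Real.exp Φp
        = Kmax + Qsup - (4 / 3) * Λ * m ^ 2 * c ^ 2 := by
      rw [heb, hb]; field_simp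
    rw [h4]; nlinarith
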